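/- arXiv:1012.0450 — 6 statements merged into one kernel-verified Lean document; each statement's English description precedes it below -/
import Mathlib

section
/- For all p ≥ 0 and all C¹ functions r : [0,1] → (0,∞), the inequality (∫₀¹ r(α)^{(p+2)/(p+1)} dα)^{(p+1)/(p+2)} ≤ ∫₀¹ √(r(α)² + r'(α)²/π²) dα holds. -/
/-!
Power means on `[0, 1]` increase with the exponent (Jensen), and `(p + 2) / (p + 1) ≤ 2`, so it
suffices to treat `p = 0`. Then the inequality is the isoperimetric inequality `2π A ≤ L²` in the
half-plane for the curve `α ↦ r(α) e^{iπα}`, which encloses the area `A = (π/2) ∫ r²` with the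
real axis and has length `L = π ∫ √(r² + r'²/π²)`. If the abscissa `X` of a curve ranges over
`[c - ρ, c + ρ]`, comparing its velocity pointwise (Cauchy–Schwarz) with the semicircle of radius
`ρ` about `c` between the two extremal points of `X` gains exactly the half-disc area, so
`A + πρ²/2 ≤ ρ L`, and `2π A ≤ L²` follows by AM–GM.
-/

open Real intervalIntegral Set MeasureTheory

theorem mul_add_mul_le_mul_sqrt {u w x y ρ : ℝ} (hρ : 0 ≤ ρ) (h : u ^ 2 + w ^ 2 ≤ ρ ^ 2) :
    u * x + w * y ≤ ρ * √(x ^ 2 + y ^ 2) := by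
  have hS := sq_sqrt (add_nonneg (sq_nonneg x) (sq_nonneg y))
  have hS0 := sqrt_nonneg (x ^ 2 + y ^ 2)
  nlinarith [sq_nonneg (u * y - w * x), sq_nonneg (ρ * √(x ^ 2 + y ^ 2) - (u * x + w * y)),
    mul_nonneg hρ hS0]

theorem integral_sqrt_sq_sub_sq {ρ : ℝ} (hρ : 0 ≤ ρ) :
    ∫ v in (-ρ)..ρ, √(ρ ^ 2 - v ^ 2) = π / 2 * ρ ^ 2 := by
  have hscale : ∀ x : ℝ, √(ρ ^ 2 - (ρ * x) ^ 2) = ρ * √(1 - x ^ 2) := fun x => by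
    rw [show ρ ^ 2 - (ρ * x) ^ 2 = ρ ^ 2 * (1 - x ^ 2) by ring, sqrt_mul (sq_nonneg ρ),
      sqrt_sq hρ]
  have h := mul_integral_comp_mul_left (a := -1) (b := 1) (c := ρ)
    (f := fun v => √(ρ ^ 2 - v ^ 2))
  simp only [mul_neg, mul_one, hscale, intervalIntegral.integral_const_mul,
    integral_sqrt_one_sub_sq] at h
  rw [← h]
  ring

theorem integral_congr_of_eqOn_Ioo {f g : ℝ → ℝ} {a b : ℝ} (hab : a ≤ b)
    (h : EqOn f g (Ioo a b)) : ∫ x in a..b, f x = ∫ x in a..b, g x := by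
  rw [integral_of_le hab, integral_of_le hab, ← restrict_Ioo_eq_restrict_Ioc]
  exact setIntegral_congr_fun measurableSet_Ioo h

theorem rpow_integral_rpow_le_rpow_integral_rpow {Ω : Type*} [MeasurableSpace Ω]
    {μ : Measure Ω} [IsProbabilityMeasure μ] {f : Ω → ℝ} {s t : ℝ} (hf : 0 ≤ᵐ[μ] f)
    (hs : 0 < s) (hst : s ≤ t) (hfs : Integrable (fun ω => f ω ^ s) μ)
    (hft : Integrable (fun ω => f ω ^ t) μ) :
    (∫ ω, f ω ^ s ∂μ) ^ (1 / s) ≤ (∫ ω, f ω ^ t ∂μ) ^ (1 / t) := by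
  have ht : 0 < t := hs.trans_le hst
  have hpow : ∀ᵐ ω ∂μ, (f ω ^ s) ^ (t / s) = f ω ^ t := by
    filter_upwards [hf] with ω hω
    rw [← rpow_mul hω, mul_div_cancel₀ t hs.ne']
  have hjensen : (∫ ω, f ω ^ s ∂μ) ^ (t / s) ≤ ∫ ω, f ω ^ t ∂μ := by
    rw [← integral_congr_ae hpow]
    exact (convexOn_rpow ((one_le_div hs).2 hst)).map_integral_le
      (continuousOn_id.rpow_const fun _ _ => Or.inr (by positivity)) isClosed_Ici
      (hf.mono fun ω hω => rpow_nonneg hω s) hfs (hft.congr (hpow.mono fun _ h => h.symm))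
  have hI : 0 ≤ ∫ ω, f ω ^ s ∂μ := integral_nonneg_of_ae (hf.mono fun ω hω => rpow_nonneg hω s)
  calc (∫ ω, f ω ^ s ∂μ) ^ (1 / s) = ((∫ ω, f ω ^ s ∂μ) ^ (t / s)) ^ (1 / t) := by
        rw [← rpow_mul hI]
        congr 1
        field_simp
    _ ≤ (∫ ω, f ω ^ t ∂μ) ^ (1 / t) := rpow_le_rpow (rpow_nonneg hI _) hjensen (by positivity)

theorem rpow_intervalIntegral_rpow_le_sqrt {f : ℝ → ℝ} {s : ℝ} (hf : ContinuousOn f (Icc 0 1))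
    (hf0 : ∀ x ∈ Icc (0 : ℝ) 1, 0 ≤ f x) (hs : 0 < s) (hs2 : s ≤ 2) :
    (∫ x in (0 : ℝ)..1, f x ^ s) ^ (1 / s) ≤ √(∫ x in (0 : ℝ)..1, f x ^ 2) := by
  have : IsProbabilityMeasure (volume.restrict (Ioc (0 : ℝ) 1)) := ⟨by simp⟩
  have hint : ∀ {t : ℝ}, 0 ≤ t → Integrable (fun x => f x ^ t) (volume.restrict (Ioc 0 1)) :=
    fun ht => ((hf.rpow_const fun _ _ => Or.inr ht).integrableOn_Icc).mono_set Ioc_subset_Icc_self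
  have := rpow_integral_rpow_le_rpow_integral_rpow
    (ae_restrict_of_forall_mem measurableSet_Ioc fun x hx => hf0 x (Ioc_subset_Icc_self hx))
    hs hs2 (hint hs.le) (hint zero_le_two)
  simp only [rpow_two] at this
  rwa [← integral_of_le zero_le_one, ← integral_of_le zero_le_one, ← sqrt_eq_rpow] at this

section PlaneCurve

variable {X Y X' Y' : ℝ → ℝ} {a b c ρ : ℝ}

theorem abs_integral_sqrt_sq_sub_sq_le (hab : a ≤ b) (hX : ContinuousOn X (Icc a b))
    (hX' : ContinuousOn X' (Icc a b)) (hY' : ContinuousOn Y' (Icc a b))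
    (hXd : ∀ x ∈ Ioo a b, HasDerivAt X (X' x) x) (hbound : ∀ x ∈ Icc a b, |X x - c| ≤ ρ) :
    |∫ v in (X a - c)..(X b - c), √(ρ ^ 2 - v ^ 2)| ≤
      ∫ x in a..b, (ρ * √(X' x ^ 2 + Y' x ^ 2) - (X x - c) * Y' x) := by
  have hρ : 0 ≤ ρ := (abs_nonneg _).trans (hbound a (left_mem_Icc.2 hab))
  have hsqrt : Continuous fun v : ℝ => √(ρ ^ 2 - v ^ 2) := by fun_prop
  have hsubst : ∫ x in a..b, √(ρ ^ 2 - (X x - c) ^ 2) * X' x =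
      ∫ v in (X a - c)..(X b - c), √(ρ ^ 2 - v ^ 2) := by
    rw [← uIcc_of_le hab] at hX hX'
    refine integral_comp_mul_deriv'' (f := fun x => X x - c) (hX.sub continuousOn_const)
      (fun x hx => ?_) hX' hsqrt.continuousOn
    rw [min_eq_left hab, max_eq_right hab] at hx
    exact ((hXd x hx).sub_const c).hasDerivWithinAt
  have hcal : ∀ η : ℝ, η ^ 2 = 1 → η * ∫ x in a..b, √(ρ ^ 2 - (X x - c) ^ 2) * X' x ≤
      ∫ x in a..b, (ρ * √(X' x ^ 2 + Y' x ^ 2) - (X x - c) * Y' x) := by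
    intro η hη
    rw [← intervalIntegral.integral_const_mul]
    refine integral_mono_on hab ?_ ?_ fun x hx => ?_
    · exact ContinuousOn.intervalIntegrable_of_Icc hab (by fun_prop)
    · exact ContinuousOn.intervalIntegrable_of_Icc hab (by fun_prop)
    have hx2 : (X x - c) ^ 2 ≤ ρ ^ 2 := sq_le_sq.2 ((hbound x hx).trans (le_abs_self ρ))
    have := mul_add_mul_le_mul_sqrt (x := X' x) (y := Y' x) hρ
      (u := η * √(ρ ^ 2 - (X x - c) ^ 2)) (w := X x - c)
      (by rw [mul_pow, hη, sq_sqrt (by linarith)]; linarith)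
    linarith
  rw [← hsubst, abs_le]
  constructor
  · linarith [hcal (-1) (by norm_num)]
  · linarith [hcal 1 (by norm_num)]

theorem integral_sub_mul_add_pi_div_two_mul_sq_le (hab : a ≤ b)
    (hX : ContinuousOn X (Icc a b)) (hX' : ContinuousOn X' (Icc a b))
    (hY' : ContinuousOn Y' (Icc a b)) (hXd : ∀ x ∈ Ioo a b, HasDerivAt X (X' x) x)
    (hbound : ∀ x ∈ Icc a b, |X x - c| ≤ ρ) {s t : ℝ} (hs : s ∈ Icc a b) (ht : t ∈ Icc a b)
    (hXs : X s = c + ρ) (hXt : X t = c - ρ) :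
    (∫ x in a..b, (X x - c) * Y' x) + π / 2 * ρ ^ 2 ≤
      ρ * ∫ x in a..b, √(X' x ^ 2 + Y' x ^ 2) := by
  have hρ : 0 ≤ ρ := (abs_nonneg _).trans (hbound s hs)
  set D : ℝ → ℝ := fun x => ρ * √(X' x ^ 2 + Y' x ^ 2) - (X x - c) * Y' x with hD
  have hDc : ContinuousOn D (Icc a b) := by fun_prop
  have hDint : ∀ u ∈ Icc a b, ∀ v ∈ Icc a b, IntervalIntegrable D volume u v :=
    fun u hu v hv => (hDc.mono (uIcc_subset_Icc hu hv)).intervalIntegrable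
  have hD0 : ∀ u ∈ Icc a b, ∀ v ∈ Icc a b, u ≤ v → 0 ≤ ∫ x in u..v, D x := by
    intro u hu v hv huv
    refine integral_nonneg huv fun x hx => ?_
    have hx2 := sq_le_sq.2 ((hbound x (Icc_subset_Icc hu.1 hv.2 hx)).trans (le_abs_self ρ))
    have := mul_add_mul_le_mul_sqrt (x := X' x) (y := Y' x) hρ (u := 0) (w := X x - c)
      (by linarith)
    simp only [hD]
    linarith
  have hmid : ∀ u ∈ Icc a b, ∀ v ∈ Icc a b, u ≤ v →
      |∫ w in (X u - c)..(X v - c), √(ρ ^ 2 - w ^ 2)| ≤ ∫ x in a..b, D x := by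
    intro u hu v hv huv
    have hsub : Icc u v ⊆ Icc a b := Icc_subset_Icc hu.1 hv.2
    rw [← integral_add_adjacent_intervals (hDint a (left_mem_Icc.2 hab) u hu)
        (hDint u hu b (right_mem_Icc.2 hab)),
      ← integral_add_adjacent_intervals (hDint u hu v hv) (hDint v hv b (right_mem_Icc.2 hab))]
    have := abs_integral_sqrt_sq_sub_sq_le (Y' := Y') huv (hX.mono hsub) (hX'.mono hsub)
      (hY'.mono hsub) (fun x hx => hXd x (Ioo_subset_Ioo hu.1 hv.2 hx))
      (fun x hx => hbound x (hsub hx))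
    linarith [hD0 a (left_mem_Icc.2 hab) u hu hu.1, hD0 v hv b (right_mem_Icc.2 hab) hv.2]
  have hsemi : |∫ w in (-ρ)..ρ, √(ρ ^ 2 - w ^ 2)| = π / 2 * ρ ^ 2 := by
    rw [integral_sqrt_sq_sub_sq hρ, abs_of_nonneg (by positivity)]
  have hlower : π / 2 * ρ ^ 2 ≤ ∫ x in a..b, D x := by
    rcases le_total s t with hst | hts
    · have := hmid s hs t ht hst
      rwa [hXs, hXt, add_sub_cancel_left, sub_sub_cancel_left, integral_symm, abs_neg,
        hsemi] at this
    · have := hmid t ht s hs hts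
      rwa [hXs, hXt, add_sub_cancel_left, sub_sub_cancel_left, hsemi] at this
  have hDsplit : ∫ x in a..b, D x =
      (ρ * ∫ x in a..b, √(X' x ^ 2 + Y' x ^ 2)) - ∫ x in a..b, (X x - c) * Y' x := by
    rw [integral_sub (ContinuousOn.intervalIntegrable_of_Icc hab (by fun_prop))
      (ContinuousOn.intervalIntegrable_of_Icc hab (by fun_prop)),
      intervalIntegral.integral_const_mul]
  linarith

theorem isoperimetric_halfPlane (hab : a ≤ b) (hX : ContinuousOn X (Icc a b))
    (hY : ContinuousOn Y (Icc a b)) (hX' : ContinuousOn X' (Icc a b))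
    (hY' : ContinuousOn Y' (Icc a b)) (hXd : ∀ x ∈ Ioo a b, HasDerivAt X (X' x) x)
    (hYd : ∀ x ∈ Ioo a b, HasDerivAt Y (Y' x) x) (hYa : Y a = 0) (hYb : Y b = 0) :
    π * ∫ x in a..b, (X x * Y' x - X' x * Y x) ≤
      (∫ x in a..b, √(X' x ^ 2 + Y' x ^ 2)) ^ 2 := by
  obtain ⟨s, hs, hmax⟩ := isCompact_Icc.exists_isMaxOn (nonempty_Icc.2 hab) hX
  obtain ⟨t, ht, hmin⟩ := isCompact_Icc.exists_isMinOn (nonempty_Icc.2 hab) hX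
  set c := (X s + X t) / 2 with hc
  set ρ := (X s - X t) / 2 with hρ
  have hbound : ∀ x ∈ Icc a b, |X x - c| ≤ ρ := fun x hx => abs_le.2
    ⟨by linarith [isMinOn_iff.1 hmin x hx], by linarith [isMaxOn_iff.1 hmax x hx]⟩
  have hcal := integral_sub_mul_add_pi_div_two_mul_sq_le hab hX hX' hY' hXd hbound hs ht
    (by ring) (by ring)
  have hint : ∀ {f : ℝ → ℝ}, ContinuousOn f (Icc a b) → IntervalIntegrable f volume a b :=
    fun hf => hf.intervalIntegrable_of_Icc hab
  have hY'0 : ∫ x in a..b, Y' x = 0 := by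
    rw [integral_eq_sub_of_hasDerivAt_of_le hab hY hYd (hint hY'), hYa, hYb, sub_zero]
  have hXY0 : ∫ x in a..b, (X' x * Y x + X x * Y' x) = 0 := by
    rw [integral_eq_sub_of_hasDerivAt_of_le hab (hX.mul hY)
      (fun x hx => (hXd x hx).mul (hYd x hx)) (hint (by fun_prop))]
    simp only [Pi.mul_apply, hYa, hYb, mul_zero, sub_zero]
  have harea : ∫ x in a..b, (X x * Y' x - X' x * Y x) = 2 * (∫ x in a..b, (X x - c) * Y' x) +
      2 * c * (∫ x in a..b, Y' x) - ∫ x in a..b, (X' x * Y x + X x * Y' x) := by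
    rw [← intervalIntegral.integral_const_mul, ← intervalIntegral.integral_const_mul,
      ← intervalIntegral.integral_add, ← intervalIntegral.integral_sub]
    · exact integral_congr fun x _ => by ring
    all_goals exact hint (by fun_prop)
  rw [harea, hY'0, hXY0]
  nlinarith [mul_le_mul_of_nonneg_left hcal pi_pos.le,
    sq_nonneg ((∫ x in a..b, √(X' x ^ 2 + Y' x ^ 2)) - π * ρ)]

end PlaneCurve

theorem sqrt_integral_sq_le_integral_sqrt {r r' : ℝ → ℝ} (hr : ContinuousOn r (Icc 0 1))
    (hr' : ContinuousOn r' (Icc 0 1)) (hd : ∀ α ∈ Ioo (0 : ℝ) 1, HasDerivAt r (r' α) α) :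
    √(∫ α in (0 : ℝ)..1, r α ^ 2) ≤ ∫ α in (0 : ℝ)..1, √(r α ^ 2 + r' α ^ 2 / π ^ 2) := by
  have hθ : ∀ α : ℝ, HasDerivAt (fun α => π * α) π α := fun α => by
    simpa using (hasDerivAt_id α).const_mul π
  have hiso := isoperimetric_halfPlane zero_le_one (X := fun α => r α * cos (π * α))
    (Y := fun α => r α * sin (π * α))
    (X' := fun α => r' α * cos (π * α) - π * r α * sin (π * α))
    (Y' := fun α => r' α * sin (π * α) + π * r α * cos (π * α))
    (by fun_prop) (by fun_prop) (by fun_prop) (by fun_prop)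
    (fun α hα => ((hd α hα).mul (hθ α).cos).congr_deriv (by ring))
    (fun α hα => ((hd α hα).mul (hθ α).sin).congr_deriv (by ring))
    (by simp) (by simp)
  have harea : ∀ α, r α * cos (π * α) * (r' α * sin (π * α) + π * r α * cos (π * α)) -
      (r' α * cos (π * α) - π * r α * sin (π * α)) * (r α * sin (π * α)) = π * r α ^ 2 :=
    fun α => by linear_combination π * r α ^ 2 * sin_sq_add_cos_sq (π * α)
  have hspeed : ∀ α, √((r' α * cos (π * α) - π * r α * sin (π * α)) ^ 2 +
      (r' α * sin (π * α) + π * r α * cos (π * α)) ^ 2) = π * √(r α ^ 2 + r' α ^ 2 / π ^ 2) := by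
    intro α
    have hsq : (r' α * cos (π * α) - π * r α * sin (π * α)) ^ 2 +
        (r' α * sin (π * α) + π * r α * cos (π * α)) ^ 2 =
          π ^ 2 * (r α ^ 2 + r' α ^ 2 / π ^ 2) := by
      field_simp
      linear_combination (r' α ^ 2 + π ^ 2 * r α ^ 2) * sin_sq_add_cos_sq (π * α)
    rw [hsq, sqrt_mul (sq_nonneg π), sqrt_sq pi_pos.le]
  simp only [harea, hspeed, intervalIntegral.integral_const_mul] at hiso
  rw [mul_pow, ← mul_assoc, ← sq] at hiso
  rw [sqrt_le_left (integral_nonneg zero_le_one fun α _ => sqrt_nonneg _)]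
  exact le_of_mul_le_mul_left hiso (by positivity)

theorem sector_isoperimetric_inequality (p : ℝ) (hp : 0 ≤ p) (r : ℝ → ℝ)
    (hr : ContDiffOn ℝ 1 r (Set.Icc 0 1)) (hpos : ∀ α ∈ Set.Icc (0:ℝ) 1, 0 < r α) :
    (∫ α in (0:ℝ)..1, r α ^ ((p + 2) / (p + 1))) ^ ((p + 1) / (p + 2)) ≤
      ∫ α in (0:ℝ)..1, Real.sqrt (r α ^ 2 + (deriv r α) ^ 2 / π ^ 2) := by
  have hs : 0 < (p + 2) / (p + 1) := by positivity
  have hs2 : (p + 2) / (p + 1) ≤ 2 := by rw [div_le_iff₀ (by positivity)]; linarith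
  have hderiv : EqOn (derivWithin r (Icc 0 1)) (deriv r) (Ioo 0 1) := fun α hα =>
    derivWithin_of_mem_nhds (Icc_mem_nhds hα.1 hα.2)
  have hr' : ∀ α ∈ Ioo (0 : ℝ) 1, HasDerivAt r (derivWithin r (Icc 0 1) α) α := fun α hα => by
    rw [hderiv hα]
    exact ((hr.differentiableOn one_ne_zero α (Ioo_subset_Icc_self hα)).differentiableAt
      (Icc_mem_nhds hα.1 hα.2)).hasDerivAt
  calc _ = (∫ α in (0:ℝ)..1, r α ^ ((p + 2) / (p + 1))) ^ (1 / ((p + 2) / (p + 1))) := by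
        rw [one_div_div]
    _ ≤ √(∫ α in (0:ℝ)..1, r α ^ 2) :=
        rpow_intervalIntegral_rpow_le_sqrt hr.continuousOn (fun α hα => (hpos α hα).le) hs hs2
    _ ≤ ∫ α in (0:ℝ)..1, √(r α ^ 2 + derivWithin r (Icc 0 1) α ^ 2 / π ^ 2) :=
        sqrt_integral_sq_le_integral_sqrt hr.continuousOn
          (hr.continuousOn_derivWithin (uniqueDiffOn_Icc zero_lt_one) le_rfl) hr'
    _ = _ := integral_congr_of_eqOn_Ioo zero_le_one fun α hα => by simp only [hderiv hα]
end

section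
/- Fix p > 0, θ₀ > 0, and I₀ > 0 satisfying I₀ < ((p+2)/(p+1)) (p+2)^{(p+1)/(p+2)} θ₀^{1/(p+2)}. Define, for t > 0, g(t) = I₀ (θ₀/(θ₀+t))^{(p+1)/(p+2)} + (p+2)^{(p+1)/(p+2)} t^{1/(p+2)} (t/(θ₀+t))^{(p+1)/(p+2)} − I₀. Then lim_{t→0⁺} g(t) = 0 and lim_{t→0⁺} g'(t) > 0; consequently there exists ε > 0 such that g(t) > 0 for all t ∈ (0, ε). -/
open Real Filter Topology Set

/-!
With `q = (p + 1) / (p + 2)` and `C = (p + 2) ^ q`, the two powers of `t` in `g` combine for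
`t > 0`: `t ^ (1 - q) * (t / (θ₀ + t)) ^ q = t * (θ₀ + t) ^ (-q)`. So `g` agrees there with
`(I₀ * θ₀ ^ q + C * t) * (θ₀ + t) ^ (-q) - I₀`, which is smooth across `t = 0`, vanishes at `0`
and has derivative `C * θ₀ ^ (-q) - q * I₀ / θ₀` there. The bound on `I₀` is exactly the
positivity of this derivative, and a function vanishing at a point with positive derivative is
positive just to its right.
-/

theorem HasDerivAt.eventually_pos_nhdsGT {f : ℝ → ℝ} {a L : ℝ} (hf : HasDerivAt f L a)
    (hL : 0 < L) (ha : f a = 0) : ∀ᶠ x in 𝓝[>] a, 0 < f x := by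
  filter_upwards [nhdsWithin_le_nhds
      (eventually_nhdsWithin_sign_eq_of_deriv_pos (hf.deriv ▸ hL) ha), self_mem_nhdsWithin]
    with x hsign hx
  rw [sign_pos (sub_pos.2 hx)] at hsign
  exact sign_eq_one_iff.1 hsign

theorem rpow_mul_div_rpow_of_add_eq_one {a q t s : ℝ} (ht : 0 < t) (hs : 0 < s)
    (haq : a + q = 1) : t ^ a * (t / s) ^ q = t * s ^ (-q) := by
  rw [div_rpow ht.le hs.le, rpow_neg hs.le, mul_div_assoc', ← rpow_add ht, haq, rpow_one,
    div_eq_mul_inv]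

section GapExtension

variable {I θ C q : ℝ}

noncomputable def gapExtension (I θ C q t : ℝ) : ℝ :=
  (I * θ ^ q + C * t) * (θ + t) ^ (-q) - I

noncomputable def gapExtensionDeriv (I θ C q t : ℝ) : ℝ :=
  C * (θ + t) ^ (-q) - q * (I * θ ^ q + C * t) * (θ + t) ^ (-q - 1)

theorem gap_eq_gapExtension {a t : ℝ} (hθ : 0 < θ) (ht : 0 < t) (haq : a + q = 1) :
    I * (θ / (θ + t)) ^ q + C * t ^ a * (t / (θ + t)) ^ q - I = gapExtension I θ C q t := by
  have hθt : 0 < θ + t := by linarith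
  rw [gapExtension, mul_assoc C, rpow_mul_div_rpow_of_add_eq_one ht hθt haq,
    div_rpow hθ.le hθt.le, rpow_neg hθt.le]
  ring

theorem gapExtension_zero (hθ : 0 < θ) : gapExtension I θ C q 0 = 0 := by
  rw [gapExtension, add_zero, mul_zero, add_zero, mul_assoc, ← rpow_add hθ, add_neg_cancel,
    rpow_zero, mul_one, sub_self]

theorem hasDerivAt_gapExtension {t : ℝ} (ht : 0 < θ + t) :
    HasDerivAt (gapExtension I θ C q) (gapExtensionDeriv I θ C q t) t := by
  have hlin : HasDerivAt (fun t => I * θ ^ q + C * t) C t := by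
    simpa using ((hasDerivAt_id t).const_mul C).const_add (I * θ ^ q)
  have hpow : HasDerivAt (fun t => (θ + t) ^ (-q)) (-q * (θ + t) ^ (-q - 1)) t := by
    simpa using ((hasDerivAt_id t).const_add θ).rpow_const (p := -q) (Or.inl ht.ne')
  exact ((hlin.mul hpow).sub_const I).congr_deriv (by unfold gapExtensionDeriv; ring)

theorem continuousAt_gapExtensionDeriv {t : ℝ} (ht : 0 < θ + t) :
    ContinuousAt (gapExtensionDeriv I θ C q) t := by
  unfold gapExtensionDeriv
  fun_prop (disch := exact Or.inl ht.ne')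

theorem gapExtensionDeriv_zero_pos (hθ : 0 < θ) (hq : 0 < q)
    (hI : I < q⁻¹ * C * θ ^ (1 - q)) : 0 < gapExtensionDeriv I θ C q 0 := by
  have hpow_inv : θ ^ q * θ ^ (-q - 1) = θ⁻¹ := by
    rw [← rpow_add hθ, show q + (-q - 1) = -1 by ring, rpow_neg_one]
  have hpow_neg : θ ^ (1 - q) * θ⁻¹ = θ ^ (-q) := by
    rw [← rpow_neg_one, ← rpow_add hθ]
    ring_nf
  have key : q * I * θ⁻¹ < C * θ ^ (-q) := calc
    q * I * θ⁻¹ < q * (q⁻¹ * C * θ ^ (1 - q)) * θ⁻¹ := by gcongr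
    _ = C * θ ^ (-q) := by rw [← hpow_neg]; field_simp
  calc 0 < C * θ ^ (-q) - q * I * θ⁻¹ := sub_pos.2 key
    _ = gapExtensionDeriv I θ C q 0 := by
      rw [gapExtensionDeriv, add_zero, mul_zero, add_zero, ← hpow_inv]; ring

end GapExtension

theorem g_positive_near_zero_general (p θ₀ I₀ : ℝ) (hp : 0 < p) (hθ : 0 < θ₀)
    (hbound : I₀ < (p + 2) / (p + 1) * (p + 2) ^ ((p + 1) / (p + 2)) * θ₀ ^ (1 / (p + 2)))
    (g : ℝ → ℝ)
    (hg : ∀ t, g t = I₀ * (θ₀ / (θ₀ + t)) ^ ((p + 1) / (p + 2)) +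
        (p + 2) ^ ((p + 1) / (p + 2)) * t ^ (1 / (p + 2)) * (t / (θ₀ + t)) ^ ((p + 1) / (p + 2))
        - I₀) :
    Tendsto g (nhdsWithin 0 (Set.Ioi 0)) (nhds 0) ∧
    (∃ L > 0, Tendsto (fun t => deriv g t) (nhdsWithin 0 (Set.Ioi 0)) (nhds L)) ∧
    ∃ ε > 0, ∀ t ∈ Set.Ioo (0:ℝ) ε, 0 < g t := by
  have hexp : 1 / (p + 2) + (p + 1) / (p + 2) = 1 := by field_simp; ring
  set q := (p + 1) / (p + 2)
  have hq : 0 < q := by positivity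
  have hinv : (p + 2) / (p + 1) = q⁻¹ := (inv_div _ _).symm
  clear_value q
  have hgh_of_pos (t : ℝ) (ht : 0 < t) : g t = gapExtension I₀ θ₀ ((p + 2) ^ q) q t :=
    (hg t).trans (gap_eq_gapExtension hθ ht hexp)
  have hgh : g =ᶠ[𝓝[>] 0] gapExtension I₀ θ₀ ((p + 2) ^ q) q :=
    eventually_nhdsWithin_of_forall hgh_of_pos
  have hθ₀ : 0 < θ₀ + 0 := by simpa using hθ
  have hderiv₀ :
      HasDerivAt (gapExtension I₀ θ₀ ((p + 2) ^ q) q) (gapExtensionDeriv I₀ θ₀ _ q 0) 0 :=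
    hasDerivAt_gapExtension hθ₀
  have hL : 0 < gapExtensionDeriv I₀ θ₀ ((p + 2) ^ q) q 0 := by
    refine gapExtensionDeriv_zero_pos hθ hq (hbound.trans_eq ?_)
    rw [hinv, eq_sub_of_add_eq hexp]
  refine ⟨?_, ⟨_, hL, ?_⟩, ?_⟩
  · have hcont := hderiv₀.continuousAt.tendsto
    rw [gapExtension_zero hθ] at hcont
    exact (hcont.mono_left nhdsWithin_le_nhds).congr' hgh.symm
  · refine (((continuousAt_gapExtensionDeriv hθ₀).tendsto).mono_left
      nhdsWithin_le_nhds).congr' ?_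
    filter_upwards [self_mem_nhdsWithin] with t (ht : 0 < t)
    rw [EventuallyEq.deriv_eq ((eventually_gt_nhds ht).mono hgh_of_pos)]
    exact (hasDerivAt_gapExtension (by linarith)).deriv.symm
  · obtain ⟨ε, hε, hsub⟩ := mem_nhdsGT_iff_exists_Ioo_subset.1
      ((hderiv₀.eventually_pos_nhdsGT hL (gapExtension_zero hθ)).and hgh)
    exact ⟨ε, hε, fun t ht => (hsub ht).2 ▸ (hsub ht).1⟩

theorem g_positive_near_zero (p θ₀ I₀ : ℝ) (hp : 0 < p) (hθ : 0 < θ₀) (hI : 0 < I₀)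
    (hbound : I₀ < (p + 2) / (p + 1) * (p + 2) ^ ((p + 1) / (p + 2)) * θ₀ ^ (1 / (p + 2)))
    (g : ℝ → ℝ)
    (hg : ∀ t, g t = I₀ * (θ₀ / (θ₀ + t)) ^ ((p + 1) / (p + 2)) +
        (p + 2) ^ ((p + 1) / (p + 2)) * t ^ (1 / (p + 2)) * (t / (θ₀ + t)) ^ ((p + 1) / (p + 2))
        - I₀) :
    Tendsto g (nhdsWithin 0 (Set.Ioi 0)) (nhds 0) ∧
    (∃ L > 0, Tendsto (fun t => deriv g t) (nhdsWithin 0 (Set.Ioi 0)) (nhds L)) ∧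
    ∃ ε > 0, ∀ t ∈ Set.Ioo (0:ℝ) ε, 0 < g t :=
  g_positive_near_zero_general p θ₀ I₀ hp hθ hbound g hg
end

section
/- The curve r(θ) = (sec((p+1)θ))^{1/(p+1)}, defined for θ ∈ (−π/(2(p+1)), π/(2(p+1))) and p > −1, has zero generalized curvature in the plane with density r^p; equivalently, its image under the coordinate change z ↦ z^{p+1}/(p+1) is a straight line, and r(θ) → ∞ as θ → ±π/(2(p+1)). -/
/-!
Under `z ↦ z ^ (p + 1)` the polar coordinates `(r, θ)` become `(r ^ (p + 1), (p + 1) θ)`, so the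
curve `r ^ (p + 1) cos ((p + 1) θ) = 1` is mapped to the vertical line `Re w = 1`, a Euclidean
geodesic. As `θ` approaches `π / (2 (p + 1))`, `cos ((p + 1) θ)` tends to `0⁺`, hence `r θ → ∞`.
-/

open Real Filter Topology Set

lemma cos_mul_pos_of_mem_Ioo {c θ : ℝ} (hc : 0 < c)
    (hθ : θ ∈ Ioo (-(π / (2 * c))) (π / (2 * c))) : 0 < cos (c * θ) := by
  have hbound : c * (π / (2 * c)) = π / 2 := by field_simp
  apply cos_pos_of_mem_Ioo
  constructor
  · calc -(π / 2) = c * -(π / (2 * c)) := by rw [mul_neg, hbound]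
      _ < c * θ := mul_lt_mul_of_pos_left hθ.1 hc
  · calc c * θ < c * (π / (2 * c)) := mul_lt_mul_of_pos_left hθ.2 hc
      _ = π / 2 := hbound

lemma one_div_rpow_one_div_rpow_mul_self {x c : ℝ} (hx : 0 < x) (hc : c ≠ 0) :
    ((1 / x) ^ (1 / c)) ^ c * x = 1 := by
  rw [← rpow_mul (by positivity), one_div_mul_cancel hc, rpow_one, one_div_mul_cancel hx.ne']

lemma tendsto_const_mul_nhdsLT {c : ℝ} (hc : 0 < c) (a : ℝ) :
    Tendsto (c * ·) (𝓝[<] a) (𝓝[<] (c * a)) :=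
  (continuous_const_mul c).continuousWithinAt.tendsto_nhdsWithin
    fun _ hx ↦ mul_lt_mul_of_pos_left hx hc

lemma tendsto_one_div_cos_mul_rpow_nhdsLT {c : ℝ} (hc : 0 < c) :
    Tendsto (fun θ ↦ (1 / cos (c * θ)) ^ (1 / c)) (𝓝[<] (π / (2 * c))) atTop := by
  have hbound : c * (π / (2 * c)) = π / 2 := by field_simp
  have hcos : Tendsto (fun θ ↦ cos (c * θ)) (𝓝[<] (π / (2 * c))) (𝓝[>] 0) :=
    tendsto_cos_pi_div_two.comp (hbound ▸ tendsto_const_mul_nhdsLT hc _)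
  simp only [one_div]
  exact (tendsto_rpow_atTop (inv_pos.2 hc)).comp (tendsto_inv_nhdsGT_zero.comp hcos)

theorem geodesic_in_plane_with_density (p : ℝ) (hp : -1 < p) (r : ℝ → ℝ)
    (hr : ∀ θ, r θ = (1 / Real.cos ((p + 1) * θ)) ^ (1 / (p + 1))) :
    (∀ θ ∈ Set.Ioo (-(π / (2 * (p + 1)))) (π / (2 * (p + 1))),
      r θ ^ (p + 1) * Real.cos ((p + 1) * θ) = 1) ∧
    Tendsto r (nhdsWithin (π / (2 * (p + 1))) (Set.Iio (π / (2 * (p + 1))))) atTop := by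
  have hc : 0 < p + 1 := by linarith
  rw [funext hr]
  exact ⟨fun θ hθ ↦ one_div_rpow_one_div_rpow_mul_self (cos_mul_pos_of_mem_Ioo hc hθ) hc.ne',
    tendsto_one_div_cos_mul_rpow_nhdsLT hc⟩
end

section
/- For −n ≤ p < 0 in ℝⁿ with density r^p (n ≥ 2), for every V > 0 and every ε > 0 there exists a Euclidean sphere S not containing the origin whose weighted enclosed volume equals V and whose weighted surface area is less than ε. In particular: for a Euclidean ball of radius R > 1 centered at distance r_min + R from the origin with r_min > R^q where q = −n/p ≥ 1, the weighted volume exceeds c₀ Rⁿ r_max^p and the weighted surface area is less than c₂ R^{n−1} r_min^p < c₂ R^{−1}, for dimensional constants c₀, c₂ > 0. -/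
/-!
Fix a unit vector `e` and a radius `r`. On the ball and on the sphere of radius `r` centred at
`D • e` the density is at most `(D - r) ^ p`, so the weighted volume of the ball is continuous in
`D` and tends to `0` as `D → ∞`, while the weighted area of the sphere is at most
`(D - r) ^ p * r ^ (n - 1) * |S^(n-1)|`. By the intermediate value theorem it therefore suffices
to find `r, t > 0` such that the ball of radius `r` at distance `t` from the origin has weighted
volume at least `V` while `t ^ p * r ^ (n - 1)` is small.

For `-n < p < 0` take `t = r ^ s` with `s * p` slightly larger than `-n`: the weighted volume is
at least a multiple of `r ^ (s * p + n) → ∞`, and `t ^ p * r ^ (n - 1) = r ^ (s * p + n - 1) → 0`.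
For `p = -n` the density is scale invariant: the ball over the segment from `t` to `3 ^ K * t`
contains `K` disjoint balls of weighted volume at least `3 ^ (-n) * |B^n|` each, while
`t ^ p * r ^ (n - 1)` is a multiple of `1 / t`.

Finiteness of `|S^(n-1)|`, the Hausdorff measure of the unit sphere, comes from the boundary of
the cube `[-1, 1] ^ n`: it is a finite union of isometric copies of `[-1, 1] ^ (n - 1)`, and it is
mapped onto the sphere by a linear isomorphism followed by the radial projection, which is
Lipschitz away from the origin.
-/

open Real MeasureTheory Metric Set Filter Topology Module
open scoped NNReal ENNReal Pointwise

theorem Fin.isometry_insertNth {m : ℕ} {α : Fin (m + 1) → Type*}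
    [∀ j, PseudoMetricSpace (α j)] (i : Fin (m + 1)) (x : α i) :
    Isometry (i.insertNth x : (∀ j, α (i.succAbove j)) → ∀ j, α j) :=
  Isometry.of_dist_eq fun y z => by simp [Fin.dist_insertNth_insertNth]

theorem sphere_pi_subset_iUnion_image_insertNth (m : ℕ) :
    sphere (0 : Fin (m + 1) → ℝ) 1 ⊆
      ⋃ (i : Fin (m + 1)) (σ ∈ ({-1, 1} : Finset ℝ)), i.insertNth σ '' closedBall 0 1 := by
  intro x hx
  rw [mem_sphere_zero_iff_norm] at hx
  obtain ⟨i, hi⟩ : ∃ i, 1 ≤ ‖x i‖ := by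
    by_contra! h
    exact hx.not_lt ((pi_norm_lt_iff one_pos).2 h)
  have hxi : |x i| = 1 := le_antisymm (hx ▸ norm_le_pi_norm x i) hi
  simp only [mem_iUnion]
  refine ⟨i, x i, ?_, i.removeNth x, ?_, i.insertNth_self_removeNth x⟩
  · rcases abs_eq (zero_le_one' ℝ) |>.1 hxi with h | h <;> simp [h]
  · rw [mem_closedBall_zero_iff, ← hx]
    exact (pi_norm_le_iff_of_nonneg (norm_nonneg x)).2 fun j => norm_le_pi_norm x _

theorem hausdorffMeasure_sphere_pi_ne_top (m : ℕ) :
    μH[m] (sphere (0 : Fin (m + 1) → ℝ) 1) ≠ ∞ := by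
  refine ne_top_of_le_ne_top ?_ (measure_mono (sphere_pi_subset_iUnion_image_insertNth m))
  refine ne_top_of_le_ne_top ?_ (measure_iUnion_fintype_le _ _)
  refine ENNReal.sum_ne_top.2 fun i _ => ne_top_of_le_ne_top ?_ (measure_biUnion_finset_le _ _)
  refine ENNReal.sum_ne_top.2 fun σ _ => ?_
  rw [(Fin.isometry_insertNth (α := fun _ => ℝ) i (σ : ℝ)).hausdorffMeasure_image
    (Or.inl m.cast_nonneg)]
  have : (μH[m] : Measure (Fin m → ℝ)) = volume := by
    simpa using hausdorffMeasure_pi_real (ι := Fin m)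
  rw [this]
  exact measure_closedBall_lt_top.ne

theorem lipschitzOnWith_inv_norm_smul {E : Type*} [NormedAddCommGroup E] [NormedSpace ℝ E]
    {r : ℝ≥0} (hr : 0 < r) :
    LipschitzOnWith (2 / r) (fun z : E => ‖z‖⁻¹ • z) {z | r ≤ ‖z‖} := by
  refine LipschitzOnWith.of_dist_le_mul fun a ha b hb => ?_
  simp only [mem_ofPred_eq] at ha hb
  have ha0 : 0 < ‖a‖ := lt_of_lt_of_le hr ha
  have hb0 : 0 < ‖b‖ := lt_of_lt_of_le hr hb
  rw [dist_eq_norm, dist_eq_norm, NNReal.coe_div, NNReal.coe_two]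
  have hsplit : ‖a‖⁻¹ • a - ‖b‖⁻¹ • b = ‖a‖⁻¹ • (a - b) + (‖a‖⁻¹ - ‖b‖⁻¹) • b := by
    rw [smul_sub, sub_smul]; abel
  have hradial : ‖(‖a‖⁻¹ - ‖b‖⁻¹) • b‖ ≤ ‖a‖⁻¹ * ‖a - b‖ := by
    rw [norm_smul, inv_sub_inv ha0.ne' hb0.ne', norm_div, norm_mul, Real.norm_of_nonneg ha0.le,
      Real.norm_of_nonneg hb0.le, div_mul_eq_mul_div, mul_div_mul_right _ _ hb0.ne',
      inv_mul_eq_div]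
    refine div_le_div_of_nonneg_right ?_ ha0.le
    simpa [Real.norm_eq_abs, abs_sub_comm] using abs_norm_sub_norm_le a b
  calc ‖‖a‖⁻¹ • a - ‖b‖⁻¹ • b‖ ≤ ‖a‖⁻¹ * ‖a - b‖ + ‖a‖⁻¹ * ‖a - b‖ := by
        rw [hsplit]
        refine (norm_add_le _ _).trans (add_le_add ?_ hradial)
        rw [norm_smul, norm_inv, norm_norm]
    _ = 2 / ‖a‖ * ‖a - b‖ := by ring
    _ ≤ 2 / r * ‖a - b‖ := by gcongr

section HausdorffSphere

variable {E : Type*} [NormedAddCommGroup E] [NormedSpace ℝ E] [MeasurableSpace E] [BorelSpace E]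

theorem hausdorffMeasure_sphere_ne_top [FiniteDimensional ℝ E] {m : ℕ}
    (hE : finrank ℝ E = m + 1) : μH[m] (sphere (0 : E) 1) ≠ ∞ := by
  let φ : (Fin (m + 1) → ℝ) ≃L[ℝ] E := .ofFinrankEq (by simp [hE])
  set K : ℝ≥0 := ‖φ.symm.toContinuousLinearMap‖₊
  have hK : 0 < (K + 1)⁻¹ := by positivity
  have hφ : MapsTo φ (sphere 0 1) {z | ((K + 1)⁻¹ : ℝ≥0) ≤ ‖z‖} := fun x hx => by
    rw [mem_sphere_zero_iff_norm] at hx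
    have h := φ.symm.toContinuousLinearMap.le_opNorm (φ x)
    simp only [ContinuousLinearEquiv.coe_coe, ContinuousLinearEquiv.symm_apply_apply, hx] at h
    rw [mem_ofPred_eq, NNReal.coe_inv, NNReal.coe_add, NNReal.coe_one,
      inv_le_iff_one_le_mul₀ (by positivity)]
    nlinarith [norm_nonneg (φ x), (coe_nnnorm φ.symm.toContinuousLinearMap) ▸ h]
  have hsub : sphere (0 : E) 1 ⊆ ((fun z : E => ‖z‖⁻¹ • z) ∘ φ) '' sphere 0 1 := by
    intro y hy
    rw [mem_sphere_zero_iff_norm] at hy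
    have hu : 0 < ‖φ.symm y‖ :=
      norm_pos_iff.2 (by simpa using ne_zero_of_norm_ne_zero (hy.trans_ne one_ne_zero))
    refine ⟨‖φ.symm y‖⁻¹ • φ.symm y, ?_, ?_⟩
    · simp [norm_smul, hu.ne']
    · simp [norm_smul, hy, smul_smul, hu.ne']
  refine ne_top_of_le_ne_top ?_ (measure_mono hsub)
  refine ne_top_of_le_ne_top ?_ (((lipschitzOnWith_inv_norm_smul hK).comp
    φ.lipschitz.lipschitzOnWith hφ).hausdorffMeasure_image_le m.cast_nonneg)
  exact ENNReal.mul_ne_top (ENNReal.rpow_ne_top_of_nonneg m.cast_nonneg ENNReal.coe_ne_top)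
    (hausdorffMeasure_sphere_pi_ne_top m)

theorem hausdorffMeasure_sphere {d : ℝ} (hd : 0 ≤ d) (c : E) {r : ℝ} (hr : 0 < r) :
    μH[d] (sphere c r) = ENNReal.ofReal (r ^ d) * μH[d] (sphere (0 : E) 1) := by
  have : sphere c r = c +ᵥ r • sphere (0 : E) 1 := by
    rw [smul_sphere' hr.ne', vadd_sphere]; simp [abs_of_pos hr]
  rw [this, hausdorffMeasure_vadd _ (Or.inl hd), Measure.hausdorffMeasure_smul₀ hd hr.ne',
    ENNReal.smul_def, smul_eq_mul, ← ENNReal.ofReal_coe_nnreal, NNReal.coe_rpow, coe_nnnorm,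
    Real.norm_of_nonneg hr.le]

end HausdorffSphere

theorem norm_mem_Icc_of_mem_closedBall {E : Type*} [SeminormedAddCommGroup E] {c x : E} {r : ℝ}
    (hx : x ∈ closedBall c r) : ‖x‖ ∈ Icc (‖c‖ - r) (‖c‖ + r) := by
  have := (abs_norm_sub_norm_le x c).trans (mem_closedBall_iff_norm.1 hx)
  rw [abs_sub_le_iff] at this
  constructor <;> linarith

theorem Finset.sum_setIntegral_le_setIntegral {X ι : Type*} [MeasurableSpace X] {μ : Measure X}
    {f : X → ℝ} {s : ι → Set X} {t : Set X} (I : Finset ι) (hs : ∀ i ∈ I, MeasurableSet (s i))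
    (hdisj : (I : Set ι).PairwiseDisjoint s) (hst : ∀ i ∈ I, s i ⊆ t)
    (hf : IntegrableOn f t μ) (hf0 : 0 ≤ᵐ[μ.restrict t] f) :
    ∑ i ∈ I, ∫ x in s i, f x ∂μ ≤ ∫ x in t, f x ∂μ := by
  rw [← integral_biUnion_finset I hs hdisj fun i hi => hf.mono_set (hst i hi)]
  exact setIntegral_mono_set hf hf0 (Eventually.of_forall (iUnion₂_subset hst))

section WeightedIntegral

variable {E : Type*} [NormedAddCommGroup E] [MeasurableSpace E] {p r : ℝ} {c : E}

theorem setIntegral_norm_rpow_le (ν : Measure E) (hp : p ≤ 0) (hr : r < ‖c‖) {s : Set E}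
    (hs : s ⊆ closedBall c r) (hνs : ν s ≠ ∞) :
    ∫ x in s, ‖x‖ ^ p ∂ν ≤ (‖c‖ - r) ^ p * ν.real s := by
  refine (Real.le_norm_self _).trans
    (norm_setIntegral_le_of_norm_le_const hνs.lt_top fun x hx => ?_)
  rw [Real.norm_of_nonneg (by positivity)]
  exact rpow_le_rpow_of_nonpos (by linarith) (norm_mem_Icc_of_mem_closedBall (hs hx)).1 hp

theorem integrableOn_norm_rpow_closedBall [OpensMeasurableSpace E] [ProperSpace E]
    (ν : Measure E) [IsFiniteMeasureOnCompacts ν] (hr : r < ‖c‖) :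
    IntegrableOn (fun x => ‖x‖ ^ p) (closedBall c r) ν := by
  refine ContinuousOn.integrableOn_compact (isCompact_closedBall c r) ?_
  refine continuous_norm.continuousOn.rpow_const fun x hx => Or.inl ?_
  have := (norm_mem_Icc_of_mem_closedBall hx).1
  exact (lt_of_lt_of_le (by linarith) this).ne'

theorem le_setIntegral_norm_rpow_ball [OpensMeasurableSpace E] [ProperSpace E] (ν : Measure E)
    [IsFiniteMeasureOnCompacts ν] (hp : p ≤ 0) (hr : r < ‖c‖) :
    (‖c‖ + r) ^ p * ν.real (ball c r) ≤ ∫ x in ball c r, ‖x‖ ^ p ∂ν := by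
  refine setIntegral_ge_of_const_le_real measurableSet_ball measure_ball_lt_top.ne
    (fun x hx => ?_) ((integrableOn_norm_rpow_closedBall ν hr).mono_set ball_subset_closedBall)
  have hx := norm_mem_Icc_of_mem_closedBall (ball_subset_closedBall hx)
  exact rpow_le_rpow_of_nonpos (by linarith [hx.1]) hx.2 hp

theorem setIntegral_ball_eq_setIntegral_ball_zero [MeasurableAdd E] (μ : Measure E)
    [μ.IsAddRightInvariant] (f : E → ℝ) (c : E) (r : ℝ) :
    ∫ x in ball c r, f x ∂μ = ∫ x in ball 0 r, f (x + c) ∂μ := by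
  rw [← (measurePreserving_add_right μ c).setIntegral_preimage_emb
    (measurableEmbedding_addRight c), preimage_add_right_ball, sub_self]

variable [BorelSpace E] [NormedSpace ℝ E] [FiniteDimensional ℝ E]
  (μ : Measure E) [μ.IsAddHaarMeasure]

theorem MeasureTheory.Measure.addHaar_real_ball [Nontrivial E] (x : E) {r : ℝ} (hr : 0 ≤ r) :
    μ.real (ball x r) = r ^ finrank ℝ E * μ.real (ball (0 : E) 1) := by
  rw [measureReal_def, Measure.addHaar_ball μ x hr, ENNReal.toReal_mul,
    ENNReal.toReal_ofReal (by positivity), measureReal_def]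

theorem continuousAt_setIntegral_norm_rpow_ball (hp : p ≤ 0) (hr : r < ‖c‖) :
    ContinuousAt (fun c => ∫ x in ball c r, ‖x‖ ^ p ∂μ) c := by
  have hshift : (fun c => ∫ x in ball c r, ‖x‖ ^ p ∂μ) =
      fun c => ∫ x in ball 0 r, ‖x + c‖ ^ p ∂μ :=
    funext fun c => setIntegral_ball_eq_setIntegral_ball_zero μ _ c r
  rw [hshift]
  set δ := (‖c‖ - r) / 2 with hδ_def
  have hδ : 0 < δ := by linarith
  have hfar : ∀ c' ∈ ball c δ, ∀ x ∈ ball (0 : E) r, δ ≤ ‖x + c'‖ := fun c' hc' x hx => by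
    have hmem : x + c' ∈ closedBall c (r + δ) := by
      rw [mem_closedBall_iff_norm, add_sub_assoc]
      exact (norm_add_le _ _).trans
        (add_le_add (mem_ball_zero_iff.1 hx).le (mem_ball_iff_norm.1 hc').le)
    linarith [(norm_mem_Icc_of_mem_closedBall hmem).1]
  refine continuousAt_of_dominated (bound := fun _ => δ ^ p) ?_ ?_
    (integrableOn_const measure_ball_lt_top.ne) ?_
  · exact Eventually.of_forall fun c' => (by fun_prop : Measurable _).aestronglyMeasurable
  · filter_upwards [ball_mem_nhds c hδ] with c' hc'
    refine (ae_restrict_iff' measurableSet_ball).2 (Eventually.of_forall fun x hx => ?_)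
    rw [Real.norm_of_nonneg (by positivity)]
    exact rpow_le_rpow_of_nonpos hδ (hfar c' hc' x hx) hp
  · refine (ae_restrict_iff' measurableSet_ball).2 (Eventually.of_forall fun x hx => ?_)
    exact ContinuousAt.rpow_const (by fun_prop)
      (Or.inl (hδ.trans_le (hfar c (mem_ball_self hδ) x hx)).ne')

theorem exists_setIntegral_norm_rpow_ball_smul_eq (hp : p < 0) {e : E} (he : ‖e‖ = 1)
    {D₀ V : ℝ} (hr : 0 ≤ r) (hrD₀ : r < D₀) (hV : 0 < V)
    (hVD₀ : V ≤ ∫ x in ball (D₀ • e) r, ‖x‖ ^ p ∂μ) :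
    ∃ D, D₀ ≤ D ∧ ∫ x in ball (D • e) r, ‖x‖ ^ p ∂μ = V := by
  have hnorm : ∀ {D : ℝ}, r < D → ‖D • e‖ = D := fun hD => by
    rw [norm_smul_of_nonneg (by linarith), he, mul_one]
  set M := μ.real (ball (0 : E) r)
  have hupper : ∀ D, r < D → ∫ x in ball (D • e) r, ‖x‖ ^ p ∂μ ≤ (D - r) ^ p * M :=
    fun D hD => by
      have := setIntegral_norm_rpow_le μ hp.le ((hnorm hD).symm ▸ hD) ball_subset_closedBall
        measure_ball_lt_top.ne
      rwa [hnorm hD, Measure.addHaar_real_ball_center] at this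
  have hlim : Tendsto (fun D => (D - r) ^ p * M) atTop (𝓝 0) := by
    have := (tendsto_rpow_neg_atTop (neg_pos.2 hp)).comp
      (tendsto_atTop_add_const_right _ (-r) tendsto_id)
    simpa [neg_neg, ← sub_eq_add_neg] using this.mul_const M
  obtain ⟨D₁, hD₁V, hD₀D₁⟩ :=
    ((hlim.eventually (gt_mem_nhds hV)).and (eventually_ge_atTop D₀)).exists
  have hcont : ContinuousOn (fun D => ∫ x in ball (D • e) r, ‖x‖ ^ p ∂μ) (Icc D₀ D₁) :=
    fun D hD => ContinuousAt.continuousWithinAt <|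
      (continuousAt_setIntegral_norm_rpow_ball μ hp.le
        (by rw [hnorm (hrD₀.trans_le hD.1)]; linarith [hD.1])).comp
        (continuous_id.smul continuous_const).continuousAt
  obtain ⟨D, hD, hDV⟩ := intermediate_value_Icc' hD₀D₁ hcont
    ⟨(hupper D₁ (hrD₀.trans_le hD₀D₁)).trans hD₁V.le, hVD₀⟩
  exact ⟨D, hD.1, hDV⟩

theorem exists_sphere_of_le_setIntegral_norm_rpow_ball (hp : p < 0) {e : E} (he : ‖e‖ = 1)
    {d t V : ℝ} (hd : 0 ≤ d) (hfin : μH[d] (sphere (0 : E) 1) ≠ ∞) (hr : 0 < r) (ht : 0 < t)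
    (hV : 0 < V) (hVt : V ≤ ∫ x in ball ((r + t) • e) r, ‖x‖ ^ p ∂μ) :
    ∃ c : E, (0 : E) ∉ closedBall c r ∧ ∫ x in ball c r, ‖x‖ ^ p ∂μ = V ∧
      ∫ x in sphere c r, ‖x‖ ^ p ∂μH[d] ≤ t ^ p * (r ^ d * μH[d].real (sphere (0 : E) 1)) := by
  obtain ⟨D, hD, hDV⟩ :=
    exists_setIntegral_norm_rpow_ball_smul_eq μ hp he hr.le (by linarith) hV hVt
  have hDe : ‖D • e‖ = D := by rw [norm_smul_of_nonneg (by linarith), he, mul_one]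
  have hS := hausdorffMeasure_sphere hd (D • e) hr
  refine ⟨D • e, fun h0 => ?_, hDV, ?_⟩
  · rw [mem_closedBall, dist_zero_left, hDe] at h0
    linarith
  calc ∫ x in sphere (D • e) r, ‖x‖ ^ p ∂μH[d]
      ≤ (D - r) ^ p * μH[d].real (sphere (D • e) r) := by
        have hfin' : μH[d] (sphere (D • e) r) ≠ ∞ := by
          rw [hS]; exact ENNReal.mul_ne_top ENNReal.ofReal_ne_top hfin
        have := setIntegral_norm_rpow_le μH[d] hp.le (by rw [hDe]; linarith)
          sphere_subset_closedBall hfin'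
        rwa [hDe] at this
    _ ≤ t ^ p * (r ^ d * μH[d].real (sphere (0 : E) 1)) := by
        rw [measureReal_def, hS, ENNReal.toReal_mul, ENNReal.toReal_ofReal (by positivity),
          ← measureReal_def]
        exact mul_le_mul_of_nonneg_right (rpow_le_rpow_of_nonpos ht (by linarith) hp.le)
          (by positivity)

theorem exists_far_ball_of_neg_finrank_lt [Nontrivial E] (hp : p < 0)
    (hnp : -(finrank ℝ E : ℝ) < p) {e : E} (he : ‖e‖ = 1) (V a : ℝ) {ε : ℝ} (hε : 0 < ε) :
    ∃ r t : ℝ, 0 < r ∧ 0 < t ∧ V ≤ ∫ x in ball ((r + t) • e) r, ‖x‖ ^ p ∂μ ∧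
      t ^ p * (r ^ ((finrank ℝ E : ℝ) - 1) * a) < ε := by
  set n : ℝ := (finrank ℝ E : ℝ)
  set ω := μ.real (ball (0 : E) 1)
  have hω : 0 < ω := ENNReal.toReal_pos (measure_ball_pos μ 0 one_pos).ne' measure_ball_lt_top.ne
  -- `t = r ^ s` with `s * p = θ - n`, so that `t ^ p * r ^ n = r ^ θ`.
  set θ := min 1 (n + p) / 2
  have hθ : 0 < θ := half_pos (lt_min one_pos (by linarith))
  have hθ₁ : θ < 1 := by have := min_le_left 1 (n + p); simp only [θ]; linarith
  have hθnp : θ ≤ n + p := by have := min_le_right 1 (n + p); simp only [θ]; linarith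
  set s := (θ - n) / p
  have hs : 1 ≤ s := by rw [le_div_iff_of_neg hp]; linarith
  have hvol : ∀ᶠ r in atTop, V ≤ 3 ^ p * ω * r ^ θ :=
    ((tendsto_rpow_atTop hθ).const_mul_atTop (by positivity)).eventually_ge_atTop V
  have harea : ∀ᶠ r : ℝ in atTop, a * r ^ (θ - 1) < ε := by
    have := (tendsto_rpow_neg_atTop (sub_pos.2 hθ₁)).const_mul a
    rw [mul_zero, neg_sub] at this
    exact this.eventually (gt_mem_nhds hε)
  obtain ⟨r, hr₁, hrV, hrε⟩ := ((eventually_ge_atTop 1).and (hvol.and harea)).exists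
  have hr : 0 < r := by linarith
  set t := r ^ s
  have hrt : r ≤ t := by simpa using rpow_le_rpow_of_exponent_le hr₁ hs
  have htp : t ^ p = r ^ (θ - n) := by rw [← rpow_mul hr.le, div_mul_cancel₀ _ hp.ne]
  refine ⟨r, t, hr, by positivity, ?_, ?_⟩
  · have hc : ‖(r + t) • e‖ = r + t := by rw [norm_smul_of_nonneg (by positivity), he, mul_one]
    have hball := le_setIntegral_norm_rpow_ball μ hp.le (c := (r + t) • e) (r := r)
      (by rw [hc]; linarith)
    rw [hc, Measure.addHaar_real_ball μ _ hr.le, ← rpow_natCast] at hball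
    calc V ≤ 3 ^ p * ω * r ^ θ := hrV
      _ = (3 * t) ^ p * (r ^ n * ω) := by
        rw [mul_rpow (by norm_num) (by positivity), htp, rpow_sub hr]
        field_simp
      _ ≤ (r + t + r) ^ p * (r ^ n * ω) :=
        mul_le_mul_of_nonneg_right (rpow_le_rpow_of_nonpos (by positivity) (by linarith) hp.le)
          (by positivity)
      _ ≤ _ := hball
  · calc t ^ p * (r ^ (n - 1) * a) = a * r ^ (θ - 1) := by
          rw [htp, ← mul_assoc, ← rpow_add hr]
          ring_nf
      _ < ε := hrε

theorem natCast_mul_le_setIntegral_norm_rpow_ball [Nontrivial E]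
    (hp : p = -(finrank ℝ E : ℝ)) {e : E} (he : ‖e‖ = 1) (K : ℕ) {l : ℝ} (hl : 0 < l) :
    K * (3 ^ p * μ.real (ball (0 : E) 1)) ≤
      ∫ x in ball (((3 ^ K - 1) / 2 * l + l) • e) ((3 ^ K - 1) / 2 * l), ‖x‖ ^ p ∂μ := by
  have hp0 : p ≤ 0 := hp ▸ neg_nonpos.2 (Nat.cast_nonneg _)
  have hdist : ∀ a b : ℝ, dist (a • e) (b • e) = |a - b| := fun a b => by
    rw [dist_eq_norm, ← sub_smul, norm_smul, he, mul_one, Real.norm_eq_abs]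
  have hnorm : ∀ {a : ℝ}, 0 ≤ a → ‖a • e‖ = a := fun ha => by
    rw [norm_smul_of_nonneg ha, he, mul_one]
  -- `b k` is the ball over the segment from `3 ^ k * l` to `3 ^ (k + 1) * l`; by scale
  -- invariance of the density `‖x‖ ^ (-n)` all of them have the same weighted volume bound.
  set b : ℕ → Set E := fun k => ball ((2 * 3 ^ k * l) • e) (3 ^ k * l)
  have hb : ∀ k, 3 ^ p * μ.real (ball (0 : E) 1) ≤ ∫ x in b k, ‖x‖ ^ p ∂μ := fun k => by
    have hk : (0 : ℝ) < 3 ^ k * l := by positivity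
    have hc : ‖(2 * 3 ^ k * l) • e‖ = 2 * (3 ^ k * l) := by rw [hnorm (by positivity)]; ring
    have := le_setIntegral_norm_rpow_ball μ hp0 (c := (2 * 3 ^ k * l) • e) (r := 3 ^ k * l)
      (by rw [hc]; linarith)
    rw [hc, Measure.addHaar_real_ball μ _ hk.le, ← rpow_natCast _ (finrank ℝ E)] at this
    refine le_trans (le_of_eq ?_) this
    have hscale : (3 ^ k * l) ^ p * (3 ^ k * l) ^ (finrank ℝ E : ℝ) = 1 := by
      rw [← rpow_add hk, hp, neg_add_cancel, rpow_zero]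
    rw [show 2 * (3 ^ k * l) + 3 ^ k * l = 3 * (3 ^ k * l) by ring, mul_rpow (by norm_num) hk.le]
    linear_combination -(3 ^ p * μ.real (ball (0 : E) 1)) * hscale
  have hsub : ∀ k ∈ Finset.range K,
      b k ⊆ ball (((3 ^ K - 1) / 2 * l + l) • e) ((3 ^ K - 1) / 2 * l) := fun k hk => by
    have h3k : (3 : ℝ) * 3 ^ k ≤ 3 ^ K := by
      rw [← pow_succ']; exact pow_le_pow_right₀ (by norm_num) (Finset.mem_range.1 hk)
    have h1 : (1 : ℝ) ≤ 3 ^ k := one_le_pow₀ (by norm_num)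
    refine ball_subset_ball' ?_
    rw [hdist]
    cases abs_cases (2 * 3 ^ k * l - ((3 ^ K - 1) / 2 * l + l)) <;>
      nlinarith [mul_le_mul_of_nonneg_right h3k hl.le, mul_le_mul_of_nonneg_right h1 hl.le]
  have hdisj : (Finset.range K : Set ℕ).PairwiseDisjoint b := by
    refine (pairwise_disjoint_on b |>.2 fun j k hjk => ball_disjoint_ball ?_).set_pairwise _
    have h3 : (3 : ℝ) * 3 ^ j ≤ 3 ^ k := by
      rw [← pow_succ']; exact pow_le_pow_right₀ (by norm_num) hjk
    have h3l := mul_le_mul_of_nonneg_right h3 hl.le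
    have hjl : 0 < 3 ^ j * l := by positivity
    rw [hdist, abs_sub_comm, abs_of_nonneg (by nlinarith)]
    nlinarith
  have hK : (0 : ℝ) ≤ (3 ^ K - 1) / 2 * l :=
    mul_nonneg (div_nonneg (sub_nonneg.2 (one_le_pow₀ (by norm_num))) two_pos.le) hl.le
  calc K * (3 ^ p * μ.real (ball (0 : E) 1))
      = ∑ _k ∈ Finset.range K, 3 ^ p * μ.real (ball (0 : E) 1) := by simp
    _ ≤ ∑ k ∈ Finset.range K, ∫ x in b k, ‖x‖ ^ p ∂μ := Finset.sum_le_sum fun k _ => hb k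
    _ ≤ _ :=
      Finset.sum_setIntegral_le_setIntegral _ (fun _ _ => measurableSet_ball) hdisj hsub
        ((integrableOn_norm_rpow_closedBall μ (by rw [hnorm (by linarith)]; linarith)).mono_set
          ball_subset_closedBall)
        (Eventually.of_forall fun x => by positivity)

theorem exists_far_ball_of_eq_neg_finrank [Nontrivial E] (hp : p = -(finrank ℝ E : ℝ))
    {e : E} (he : ‖e‖ = 1) (V a : ℝ) {ε : ℝ} (hε : 0 < ε) :
    ∃ r t : ℝ, 0 < r ∧ 0 < t ∧ V ≤ ∫ x in ball ((r + t) • e) r, ‖x‖ ^ p ∂μ ∧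
      t ^ p * (r ^ ((finrank ℝ E : ℝ) - 1) * a) < ε := by
  set n : ℝ := (finrank ℝ E : ℝ)
  set ω := μ.real (ball (0 : E) 1)
  have hω : 0 < ω := ENNReal.toReal_pos (measure_ball_pos μ 0 one_pos).ne' measure_ball_lt_top.ne
  obtain ⟨K, hK⟩ := exists_nat_ge (V / (3 ^ p * ω))
  set C : ℝ := (3 ^ (K + 1) - 1) / 2
  have hC : 0 < C := by
    have : (3 : ℝ) ≤ 3 ^ (K + 1) := le_self_pow₀ (by norm_num) (by omega)
    simp only [C]; linarith
  have harea : ∀ᶠ l : ℝ in atTop, C ^ (n - 1) * a * l⁻¹ < ε := by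
    have := tendsto_inv_atTop_zero.const_mul (C ^ (n - 1) * a)
    rw [mul_zero] at this
    exact this.eventually (gt_mem_nhds hε)
  obtain ⟨l, hl, hlε⟩ := ((eventually_gt_atTop 0).and harea).exists
  refine ⟨C * l, l, by positivity, hl, ?_, ?_⟩
  · calc V ≤ (K + 1 : ℕ) * (3 ^ p * ω) := by
          rw [div_le_iff₀ (by positivity)] at hK
          push_cast; linarith [mul_pos (rpow_pos_of_pos three_pos p) hω]
      _ ≤ _ := natCast_mul_le_setIntegral_norm_rpow_ball μ hp he (K + 1) hl
  · calc l ^ p * ((C * l) ^ (n - 1) * a) = C ^ (n - 1) * a * (l ^ p * l ^ (n - 1)) := by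
          rw [mul_rpow hC.le hl.le]; ring
      _ = C ^ (n - 1) * a * l⁻¹ := by
          rw [← rpow_add hl, hp, show -n + (n - 1) = -1 by ring, rpow_neg_one]
      _ < ε := hlε

theorem exists_sphere_setIntegral_norm_rpow_ball_eq_and_lt {V ε : ℝ}
    (hp₁ : -(finrank ℝ E : ℝ) ≤ p) (hp₂ : p < 0) (hV : 0 < V) (hε : 0 < ε) :
    ∃ (c : E) (R : ℝ), 0 < R ∧ (0 : E) ∉ closedBall c R ∧ ∫ x in ball c R, ‖x‖ ^ p ∂μ = V ∧
      ∫ x in sphere c R, ‖x‖ ^ p ∂μH[(finrank ℝ E : ℝ) - 1] < ε := by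
  obtain ⟨m, hm⟩ : ∃ m, finrank ℝ E = m + 1 :=
    Nat.exists_eq_succ_of_ne_zero fun h => by rw [h, Nat.cast_zero, neg_zero] at hp₁; linarith
  have : Nontrivial E := Module.nontrivial_of_finrank_eq_succ hm
  obtain ⟨e, he⟩ := exists_norm_eq E zero_le_one
  have hd : (finrank ℝ E : ℝ) - 1 = m := by rw [hm]; push_cast; ring
  set a := μH[(finrank ℝ E : ℝ) - 1].real (sphere (0 : E) 1)
  obtain ⟨r, t, hr, ht, hVt, hε'⟩ : ∃ r t : ℝ, 0 < r ∧ 0 < t ∧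
      V ≤ ∫ x in ball ((r + t) • e) r, ‖x‖ ^ p ∂μ ∧
      t ^ p * (r ^ ((finrank ℝ E : ℝ) - 1) * a) < ε := by
    rcases hp₁.eq_or_lt with h | h
    · exact exists_far_ball_of_eq_neg_finrank μ h.symm he V a hε
    · exact exists_far_ball_of_neg_finrank_lt μ hp₂ h he V a hε
  obtain ⟨c, hc₀, hcV, hcε⟩ := exists_sphere_of_le_setIntegral_norm_rpow_ball μ hp₂ he
    (hd ▸ m.cast_nonneg) (hd ▸ hausdorffMeasure_sphere_ne_top hm) hr ht hV hVt
  exact ⟨c, r, hr, hc₀, hcV, hcε.trans_lt hε'⟩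

end WeightedIntegral

theorem nonexistence_Rn_general (n : ℕ) (p : ℝ) (hp₁ : -(n : ℝ) ≤ p) (hp₂ : p < 0)
    (V ε : ℝ) (hV : 0 < V) (hε : 0 < ε) :
    ∃ (c : EuclideanSpace ℝ (Fin n)) (R : ℝ), 0 < R ∧
      (0 : EuclideanSpace ℝ (Fin n)) ∉ closedBall c R ∧
      (∫ x in ball c R, ‖x‖ ^ p) = V ∧
      (∫ x in sphere c R, ‖x‖ ^ p ∂(μH[(n : ℝ) - 1])) < ε := by
  simpa using exists_sphere_setIntegral_norm_rpow_ball_eq_and_lt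
    (E := EuclideanSpace ℝ (Fin n)) volume (by simpa using hp₁) hp₂ hV hε

theorem nonexistence_Rn (n : ℕ) (hn : 2 ≤ n) (p : ℝ) (hp₁ : -(n : ℝ) ≤ p) (hp₂ : p < 0)
    (V ε : ℝ) (hV : 0 < V) (hε : 0 < ε) :
    ∃ (c : EuclideanSpace ℝ (Fin n)) (R : ℝ), 0 < R ∧
      (0 : EuclideanSpace ℝ (Fin n)) ∉ closedBall c R ∧
      (∫ x in ball c R, ‖x‖ ^ p) = V ∧
      (∫ x in sphere c R, ‖x‖ ^ p ∂(μH[(n : ℝ) - 1])) < ε :=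
  nonexistence_Rn_general n p hp₁ hp₂ V ε hV hε
end

section
/- In the θ₀-sector (θ₀ > π) with density a > 1 inside the unit disk and 1 outside: an arc of radius ρ about the origin enclosing weighted area A = aθ₀/2 + θ₀(ρ² − 1)/2 has weighted perimeter θ₀ρ, while a semicircle on the edge outside the disk enclosing weighted area A has perimeter √(2πA). These perimeters are equal precisely when A = θ₀²(a−1)/(2(θ₀ − π)); the arc has strictly smaller perimeter for aθ₀/2 ≤ A < θ₀²(a−1)/(2(θ₀−π)) and strictly larger perimeter for A > θ₀²(a−1)/(2(θ₀−π)). -/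
open Real

theorem arc_vs_semicircle_transition (a θ₀ ρ A : ℝ) (ha : 1 < a) (hθ : π < θ₀)
    (hρ : 1 ≤ ρ) (hA : A = a * θ₀ / 2 + θ₀ * (ρ ^ 2 - 1) / 2) :
    (θ₀ * ρ = Real.sqrt (2 * π * A) ↔ A = θ₀ ^ 2 * (a - 1) / (2 * (θ₀ - π))) ∧
    (A < θ₀ ^ 2 * (a - 1) / (2 * (θ₀ - π)) → θ₀ * ρ < Real.sqrt (2 * π * A)) ∧
    (A > θ₀ ^ 2 * (a - 1) / (2 * (θ₀ - π)) → θ₀ * ρ > Real.sqrt (2 * π * A)) := by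
  have hπ := Real.pi_pos
  have hθ0 : (0:ℝ) < θ₀ := hπ.trans hθ
  have hd : (0:ℝ) < θ₀ - π := by linarith
  have hA0 : 0 < A := by
    rw [hA]; nlinarith [sq_nonneg ρ, hρ]
  have h2A : 0 ≤ 2 * π * A := by positivity
  have hθρ : 0 ≤ θ₀ * ρ := by positivity
  have key : (θ₀ * ρ) ^ 2 - 2 * π * A
      = 2 * (θ₀ - π) * (A - θ₀ ^ 2 * (a - 1) / (2 * (θ₀ - π))) := by
    rw [hA]; field_simp; ring
  refine ⟨⟨fun h => ?_, fun h => ?_⟩, fun h => ?_, fun h => ?_⟩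
  · have hsq : (θ₀ * ρ) ^ 2 = 2 * π * A := by
      rw [h, Real.sq_sqrt h2A]
    have := key
    rw [hsq] at this
    have h0 : 2 * (θ₀ - π) * (A - θ₀ ^ 2 * (a - 1) / (2 * (θ₀ - π))) = 0 := by linarith
    have := mul_eq_zero.mp h0
    rcases this with h1 | h1
    · nlinarith
    · linarith
  · have hsq : (θ₀ * ρ) ^ 2 = 2 * π * A := by
      have : A - θ₀ ^ 2 * (a - 1) / (2 * (θ₀ - π)) = 0 := by linarith
      rw [this, mul_zero] at key; linarith
    rw [← hsq, Real.sqrt_sq hθρ]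
  · rw [Real.lt_sqrt hθρ]
    nlinarith
  · have hθρ' : 0 < θ₀ * ρ := by positivity
    rw [gt_iff_lt, Real.sqrt_lt' hθρ']
    nlinarith
end

section
/- In the θ₀-sector with density a > 1 inside the unit disk and 1 outside, with θ₀ > aπ: for every weighted area A, the semicircle on the edge outside the unit disk (perimeter √(2πA)) has strictly smaller perimeter than the arc of radius ρ ≥ 1 about the origin enclosing the same area (perimeter θ₀ρ with A = aθ₀/2 + θ₀(ρ²−1)/2), and also strictly smaller perimeter than the arc of radius ρ ≤ 1 about the origin (perimeter aθ₀ρ with A = aθ₀ρ²/2). -/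
open Real

theorem semicircle_beats_arcs (a θ₀ : ℝ) (ha : 1 < a) (hθ : a * π < θ₀) :
    (∀ ρ : ℝ, 1 ≤ ρ →
      Real.sqrt (2 * π * (a * θ₀ / 2 + θ₀ * (ρ ^ 2 - 1) / 2)) < θ₀ * ρ) ∧
    (∀ ρ : ℝ, 0 < ρ → ρ ≤ 1 →
      Real.sqrt (2 * π * (a * θ₀ * ρ ^ 2 / 2)) < a * θ₀ * ρ) := by
  have hπ : 0 < π := Real.pi_pos
  have hθ0 : 0 < θ₀ := lt_trans (by nlinarith) hθ
  constructor
  · intro ρ hρ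
    have hρ0 : 0 < ρ := lt_of_lt_of_le one_pos hρ
    rw [Real.sqrt_lt' (by positivity)]
    nlinarith [mul_lt_mul_of_pos_right hθ (mul_pos hθ0 (pow_pos hρ0 2)),
      mul_nonneg (mul_nonneg hπ.le hθ0.le)
        (mul_nonneg (by linarith : (0:ℝ) ≤ a - 1) (by nlinarith : (0:ℝ) ≤ ρ ^ 2 - 1))]
  · intro ρ hρ0 hρ1
    rw [Real.sqrt_lt' (by positivity)]
    have hπa : π < a * θ₀ := by nlinarith
    nlinarith [mul_lt_mul_of_pos_right hπa (mul_pos (mul_pos (by linarith : (0:ℝ) < a) hθ0) (pow_pos hρ0 2))]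
end
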